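/- The unique fixed point ε₀ of g(δ) = (1-δ)·[Φ((1/3)(y_δ + 2√(y_δ²+6 ln 2))) - Φ((1/3)(2 y_δ + √(y_δ²+6 ln 2)))] with y_δ = Φ⁻¹(δ/(1-δ)) satisfies 1/5 < ε₀ < 1/4. -/

import Mathlib

open MeasureTheory ProbabilityTheory

/-- The standard normal cumulative distribution function. -/
noncomputable def Phi (x : ℝ) : ℝ := ((gaussianReal 0 1) (Set.Iic x)).toReal

/-- The inverse of the standard normal CDF. -/
noncomputable def PhiInv : ℝ → ℝ := Function.invFun Phi

/-- The normal quantile `y_δ = Φ⁻¹(δ/(1-δ))`. -/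
noncomputable def yq (δ : ℝ) : ℝ := PhiInv (δ / (1 - δ))

/-- The function `g` from the location-scale breakdown analysis. -/
noncomputable def gfun (δ : ℝ) : ℝ :=
  (1 - δ) *
    (Phi ((yq δ + 2 * Real.sqrt (yq δ ^ 2 + 6 * Real.log 2)) / 3) -
      Phi ((2 * yq δ + Real.sqrt (yq δ ^ 2 + 6 * Real.log 2)) / 3))

/-!
Put `v = δ / (1 - δ)`, `y = Φ⁻¹ v < 0` and `s = √(y² + 6 log 2)`, so that
`g δ = (1 - δ) (Φ A - Φ B)` with `A = (y + 2s)/3` and `B = (2y + s)/3`. For every `y`,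
`A ≥ √(2 log 2) > 1.17`, and `B` is increasing in `y`. If `δ ≤ 1/5` then `v ≤ 1/4`, so `y ≤ -0.6`
and `[B, A] ⊇ [0.31, 1.17]`, an interval of normal mass `> 1/4`; hence `g δ > δ`. If
`1/4 ≤ δ < 1/3` then `-0.44 ≤ y < 0`, so `[B, A] ⊆ [0.38, 1.4]`, of mass `< 1/3`; hence `g δ < δ`.
The normal masses are bounded by integrating the Taylor polynomial of `exp (-x²/2)` of degree 6,
whose error is at most `5x⁸/1536` when `x² ≤ 2`.
-/

open Real Set

lemma continuous_gaussianPDFReal (μ : ℝ) (v : NNReal) : Continuous (gaussianPDFReal μ v) := by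
  rw [gaussianPDFReal_def]; fun_prop

lemma Phi_eq_cdf : Phi = cdf (gaussianReal 0 1) := by
  funext x; rw [cdf_eq_real, measureReal_def, Phi]

lemma Phi_eq_integral (x : ℝ) : Phi x = ∫ t in Iic x, gaussianPDFReal 0 1 t := by
  rw [Phi, gaussianReal_apply_eq_integral 0 one_ne_zero,
    ENNReal.toReal_ofReal (integral_nonneg fun t => (gaussianPDFReal_nonneg 0 1 t))]

lemma Phi_sub_Phi_eq_integral (a b : ℝ) : Phi b - Phi a = ∫ t in a..b, gaussianPDFReal 0 1 t := by
  rw [Phi_eq_integral, Phi_eq_integral]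
  exact intervalIntegral.integral_Iic_sub_Iic (integrable_gaussianPDFReal 0 1).integrableOn
    (integrable_gaussianPDFReal 0 1).integrableOn

lemma Phi_strictMono : StrictMono Phi := fun a b hab => by
  have := intervalIntegral.intervalIntegral_pos_of_pos
    ((continuous_gaussianPDFReal 0 1).intervalIntegrable a b)
    (fun t => gaussianPDFReal_pos 0 1 t one_ne_zero) hab
  linarith [Phi_sub_Phi_eq_integral a b]

lemma Phi_continuous : Continuous Phi := by
  have h : Phi = fun x => Phi 0 + ∫ t in (0 : ℝ)..x, gaussianPDFReal 0 1 t := by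
    funext x; linarith [Phi_sub_Phi_eq_integral 0 x]
  rw [h]
  exact continuous_const.add (intervalIntegral.continuous_primitive
    (fun a b => (continuous_gaussianPDFReal 0 1).intervalIntegrable a b) 0)

lemma Phi_neg (x : ℝ) : Phi (-x) = 1 - Phi x := by
  have heven (t : ℝ) : gaussianPDFReal 0 1 (-t) = gaussianPDFReal 0 1 t := by
    simp [gaussianPDFReal_def]
  have hIic : ∫ t in Iic (-x), gaussianPDFReal 0 1 t = ∫ t in Ioi x, gaussianPDFReal 0 1 t := by
    simpa only [heven, neg_neg] using integral_comp_neg_Iic (-x) (gaussianPDFReal 0 1)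
  have htotal := intervalIntegral.integral_Iic_add_Ioi (b := x)
    (integrable_gaussianPDFReal 0 1).integrableOn (integrable_gaussianPDFReal 0 1).integrableOn
  rw [integral_gaussianPDFReal_eq_one 0 one_ne_zero] at htotal
  rw [Phi_eq_integral, Phi_eq_integral, hIic]
  linarith

lemma Phi_zero : Phi 0 = 1 / 2 := by
  linarith [neg_zero (G := ℝ) ▸ Phi_neg 0]

lemma Phi_PhiInv {v : ℝ} (h0 : 0 < v) (h1 : v < 1) : Phi (PhiInv v) = v := by
  have hbot := (Phi_eq_cdf ▸ tendsto_cdf_atBot (gaussianReal 0 1)).eventually (gt_mem_nhds h0)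
  have htop := (Phi_eq_cdf ▸ tendsto_cdf_atTop (gaussianReal 0 1)).eventually (lt_mem_nhds h1)
  exact Function.invFun_eq (mem_range_of_exists_le_of_exists_ge Phi_continuous
    (hbot.exists.imp fun _ => le_of_lt) (htop.exists.imp fun _ => le_of_lt))

lemma Phi_yq {δ : ℝ} (h0 : 0 < δ) (h : δ < 1 / 2) : Phi (yq δ) = δ / (1 - δ) :=
  Phi_PhiInv (div_pos h0 (by linarith)) ((div_lt_one (by linarith)).2 (by linarith))

section TaylorBounds

lemma abs_exp_neg_sq_half_sub_le {x : ℝ} (hx : x ^ 2 ≤ 2) :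
    |exp (-x ^ 2 / 2) - (1 - x ^ 2 / 2 + x ^ 4 / 8 - x ^ 6 / 48)| ≤ 5 * x ^ 8 / 1536 := by
  have habs : |(-x ^ 2 / 2)| = x ^ 2 / 2 := by
    rw [abs_of_nonpos (by nlinarith [sq_nonneg x])]; ring
  have hsum : ∑ m ∈ Finset.range 4, (-x ^ 2 / 2) ^ m / (m.factorial : ℝ) =
      1 - x ^ 2 / 2 + x ^ 4 / 8 - x ^ 6 / 48 := by
    norm_num [Finset.sum_range_succ, Nat.factorial]; ring
  have h := Real.exp_bound (x := -x ^ 2 / 2) (by rw [habs]; linarith) (n := 4) (by norm_num)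
  rw [hsum, habs] at h
  convert h using 1
  norm_num [Nat.factorial]; ring

/-- A primitive of the degree-6 Taylor polynomial of `exp (-x²/2)` plus the error term `9 c x⁸`. -/
noncomputable def gaussTaylorPrimitive (c x : ℝ) : ℝ :=
  x - x ^ 3 / 6 + x ^ 5 / 40 - x ^ 7 / 336 + c * x ^ 9

lemma hasDerivAt_gaussTaylorPrimitive (c x : ℝ) :
    HasDerivAt (gaussTaylorPrimitive c)
      (1 - x ^ 2 / 2 + x ^ 4 / 8 - x ^ 6 / 48 + 9 * c * x ^ 8) x := by
  have h := ((((hasDerivAt_id x).sub ((hasDerivAt_pow 3 x).div_const 6)).add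
    ((hasDerivAt_pow 5 x).div_const 40)).sub ((hasDerivAt_pow 7 x).div_const 336)).add
    ((hasDerivAt_pow 9 x).const_mul c)
  exact h.congr_deriv (by norm_num; ring)

variable {a b : ℝ}

lemma sq_le_two_of_mem_Icc (ha : a ^ 2 ≤ 2) (hb : b ^ 2 ≤ 2) {x : ℝ} (hx : x ∈ Icc a b) :
    x ^ 2 ≤ 2 := by
  rcases le_total 0 x with h | h <;> nlinarith [hx.1, hx.2]

lemma gaussTaylorPrimitive_sub_le_integral (hab : a ≤ b) (ha : a ^ 2 ≤ 2) (hb : b ^ 2 ≤ 2) :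
    gaussTaylorPrimitive (-5 / 13824) b - gaussTaylorPrimitive (-5 / 13824) a ≤
      ∫ x in a..b, exp (-x ^ 2 / 2) := by
  refine intervalIntegral.sub_le_integral_of_hasDeriv_right_of_le hab
    (fun x _ => (hasDerivAt_gaussTaylorPrimitive _ x).continuousAt.continuousWithinAt)
    (fun x _ => (hasDerivAt_gaussTaylorPrimitive _ x).hasDerivWithinAt)
    (by fun_prop : Continuous fun x : ℝ => exp (-x ^ 2 / 2)).integrableOn_Icc fun x hx => ?_
  have := abs_le.1 <|
    abs_exp_neg_sq_half_sub_le (sq_le_two_of_mem_Icc ha hb (Ioo_subset_Icc_self hx))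
  linarith

lemma integral_le_gaussTaylorPrimitive_sub (hab : a ≤ b) (ha : a ^ 2 ≤ 2) (hb : b ^ 2 ≤ 2) :
    ∫ x in a..b, exp (-x ^ 2 / 2) ≤
      gaussTaylorPrimitive (5 / 13824) b - gaussTaylorPrimitive (5 / 13824) a := by
  refine intervalIntegral.integral_le_sub_of_hasDeriv_right_of_le hab
    (fun x _ => (hasDerivAt_gaussTaylorPrimitive _ x).continuousAt.continuousWithinAt)
    (fun x _ => (hasDerivAt_gaussTaylorPrimitive _ x).hasDerivWithinAt)
    (by fun_prop : Continuous fun x : ℝ => exp (-x ^ 2 / 2)).integrableOn_Icc fun x hx => ?_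
  have := abs_le.1 <|
    abs_exp_neg_sq_half_sub_le (sq_le_two_of_mem_Icc ha hb (Ioo_subset_Icc_self hx))
  linarith

lemma sqrt_two_pi_mem_Icc : √(2 * π) ∈ Icc 2.50662 2.50663 := by
  constructor
  · rw [le_sqrt (by norm_num) (by positivity)]; nlinarith [pi_gt_d6]
  · rw [sqrt_le_left (by norm_num)]; nlinarith [pi_lt_d6]

lemma Phi_sub_Phi_eq_integral_exp_div (a b : ℝ) :
    Phi b - Phi a = (∫ x in a..b, exp (-x ^ 2 / 2)) / √(2 * π) := by
  simp [Phi_sub_Phi_eq_integral, gaussianPDFReal_def, intervalIntegral.integral_const_mul,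
    div_eq_inv_mul]

lemma le_Phi_sub_Phi (hab : a ≤ b) (ha : a ^ 2 ≤ 2) (hb : b ^ 2 ≤ 2) :
    (gaussTaylorPrimitive (-5 / 13824) b - gaussTaylorPrimitive (-5 / 13824) a) / 2.50663 ≤
      Phi b - Phi a := by
  have hI : 0 ≤ ∫ x in a..b, exp (-x ^ 2 / 2) :=
    intervalIntegral.integral_nonneg hab fun x _ => (exp_pos _).le
  rw [Phi_sub_Phi_eq_integral_exp_div]
  calc _ ≤ (∫ x in a..b, exp (-x ^ 2 / 2)) / 2.50663 := by
        gcongr; exact gaussTaylorPrimitive_sub_le_integral hab ha hb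
    _ ≤ _ := by gcongr; exact sqrt_two_pi_mem_Icc.2

lemma Phi_sub_Phi_le (hab : a ≤ b) (ha : a ^ 2 ≤ 2) (hb : b ^ 2 ≤ 2) :
    Phi b - Phi a ≤
      (gaussTaylorPrimitive (5 / 13824) b - gaussTaylorPrimitive (5 / 13824) a) / 2.50662 := by
  have hI : 0 ≤ ∫ x in a..b, exp (-x ^ 2 / 2) :=
    intervalIntegral.integral_nonneg hab fun x _ => (exp_pos _).le
  rw [Phi_sub_Phi_eq_integral_exp_div]
  calc _ ≤ (∫ x in a..b, exp (-x ^ 2 / 2)) / 2.50662 := by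
        gcongr; exact sqrt_two_pi_mem_Icc.1
    _ ≤ _ := by gcongr; exact integral_le_gaussTaylorPrimitive_sub hab ha hb

end TaylorBounds

lemma one_fourth_lt_Phi_neg_three_fifths : 1 / 4 < Phi (-0.6) := by
  have := Phi_sub_Phi_le (a := -0.6) (b := 0) (by norm_num) (by norm_num) (by norm_num)
  rw [Phi_zero] at this
  norm_num [gaussTaylorPrimitive] at this ⊢
  linarith

lemma Phi_neg_lt_one_third : Phi (-0.44) < 1 / 3 := by
  have := le_Phi_sub_Phi (a := -0.44) (b := 0) (by norm_num) (by norm_num) (by norm_num)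
  rw [Phi_zero] at this
  norm_num [gaussTaylorPrimitive] at this ⊢
  linarith

lemma one_fourth_lt_Phi_sub_Phi : 1 / 4 < Phi 1.17 - Phi 0.31 :=
  lt_of_lt_of_le (by norm_num [gaussTaylorPrimitive])
    (le_Phi_sub_Phi (by norm_num) (by norm_num) (by norm_num))

lemma Phi_sub_Phi_lt_one_third : Phi 1.4 - Phi 0.38 < 1 / 3 :=
  lt_of_le_of_lt (Phi_sub_Phi_le (by norm_num) (by norm_num) (by norm_num))
    (by norm_num [gaussTaylorPrimitive])

lemma le_add_two_mul_sqrt_div_three (m y : ℝ) :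
    m ≤ (y + 2 * √(y ^ 2 + 3 * m ^ 2)) / 3 := by
  have hs := sq_sqrt (by positivity : 0 ≤ y ^ 2 + 3 * m ^ 2)
  have hs0 := sqrt_nonneg (y ^ 2 + 3 * m ^ 2)
  rw [le_div_iff₀ (by norm_num)]
  -- `4 (y² + 3m²) - (3m - y)² = 3 (y + m)²`
  nlinarith [sq_nonneg (y + m), sq_nonneg (2 * √(y ^ 2 + 3 * m ^ 2) - (3 * m - y))]

lemma monotone_two_mul_add_sqrt {c : ℝ} (hc : 0 ≤ c) :
    Monotone fun y => 2 * y + √(y ^ 2 + c) := by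
  intro y z hyz
  have hy := sq_sqrt (by positivity : 0 ≤ y ^ 2 + c)
  have hz := sq_sqrt (by positivity : 0 ≤ z ^ 2 + c)
  have hy' := abs_le.1 (abs_le_sqrt (by linarith : y ^ 2 ≤ y ^ 2 + c))
  have hz' := abs_le.1 (abs_le_sqrt (by linarith : z ^ 2 ≤ z ^ 2 + c))
  have hlip : √(y ^ 2 + c) - √(z ^ 2 + c) ≤ z - y := by nlinarith
  dsimp only
  linarith

lemma lt_gfun_of_le_one_fifth {δ : ℝ} (h0 : 0 < δ) (h : δ ≤ 1 / 5) : δ < gfun δ := by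
  set y := yq δ
  set s := √(y ^ 2 + 6 * log 2)
  have hy : y ≤ -0.6 := by
    refine (Phi_strictMono.lt_iff_lt.1 ?_).le
    calc Phi y = δ / (1 - δ) := Phi_yq h0 (by linarith)
      _ ≤ 1 / 4 := by rw [div_le_iff₀ (by linarith)]; linarith
      _ < Phi (-0.6) := one_fourth_lt_Phi_neg_three_fifths
  have hupper : 1.17 ≤ (y + 2 * s) / 3 :=
    calc (1.17 : ℝ) ≤ √(2 * log 2) := by
          rw [le_sqrt (by norm_num) (by positivity)]; linarith [log_two_gt_d9]
      _ ≤ (y + 2 * s) / 3 := by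
          have := le_add_two_mul_sqrt_div_three √(2 * log 2) y
          rwa [sq_sqrt (by positivity), ← mul_assoc, show (3 : ℝ) * 2 = 6 by norm_num] at this
  have hlower : (2 * y + s) / 3 ≤ 0.31 :=
    calc (2 * y + s) / 3 ≤ (2 * -0.6 + √((-0.6) ^ 2 + 6 * log 2)) / 3 := by
          gcongr ?_ / 3
          exact monotone_two_mul_add_sqrt (c := 6 * log 2) (by positivity) hy
      _ ≤ 0.31 := by
          rw [div_le_iff₀ (by norm_num), ← le_sub_iff_add_le', sqrt_le_left (by norm_num)]
          linarith [log_two_lt_d9]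
  have hdiff : 1 / 4 < Phi ((y + 2 * s) / 3) - Phi ((2 * y + s) / 3) := by
    linarith [Phi_strictMono.monotone hupper, Phi_strictMono.monotone hlower,
      one_fourth_lt_Phi_sub_Phi]
  calc δ ≤ 4 / 5 * (1 / 4) := by linarith
    _ < 4 / 5 * (Phi ((y + 2 * s) / 3) - Phi ((2 * y + s) / 3)) := by gcongr
    _ ≤ (1 - δ) * (Phi ((y + 2 * s) / 3) - Phi ((2 * y + s) / 3)) :=
        mul_le_mul_of_nonneg_right (by linarith) (by linarith)
    _ = gfun δ := rfl

lemma gfun_lt_of_one_fourth_le {δ : ℝ} (h : 1 / 4 ≤ δ) (h3 : δ < 1 / 3) : gfun δ < δ := by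
  set y := yq δ
  set s := √(y ^ 2 + 6 * log 2)
  have hΦy : Phi y = δ / (1 - δ) := Phi_yq (by linarith) (by linarith)
  have hy : -0.44 ≤ y := by
    refine (Phi_strictMono.lt_iff_lt.1 ?_).le
    calc Phi (-0.44) < 1 / 3 := Phi_neg_lt_one_third
      _ ≤ Phi y := by rw [hΦy, le_div_iff₀ (by linarith)]; linarith
  have hy0 : y < 0 := by
    refine Phi_strictMono.lt_iff_lt.1 ?_
    rw [hΦy, Phi_zero, div_lt_iff₀ (by linarith)]; linarith
  have hs : 2.03 ≤ s ∧ s ≤ 2.1 := by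
    constructor
    · rw [le_sqrt (by norm_num) (by positivity)]; nlinarith [log_two_gt_d9]
    · rw [sqrt_le_left (by norm_num)]; nlinarith [log_two_lt_d9]
  have hdiff : Phi ((y + 2 * s) / 3) - Phi ((2 * y + s) / 3) < 1 / 3 := by
    have hupper : (y + 2 * s) / 3 ≤ 1.4 := by linarith
    have hlower : 0.38 ≤ (2 * y + s) / 3 := by linarith
    linarith [Phi_strictMono.monotone hupper, Phi_strictMono.monotone hlower,
      Phi_sub_Phi_lt_one_third]
  have hdiff0 : 0 ≤ Phi ((y + 2 * s) / 3) - Phi ((2 * y + s) / 3) :=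
    sub_nonneg.2 (Phi_strictMono.monotone (by linarith))
  calc gfun δ = (1 - δ) * (Phi ((y + 2 * s) / 3) - Phi ((2 * y + s) / 3)) := rfl
    _ ≤ 3 / 4 * (Phi ((y + 2 * s) / 3) - Phi ((2 * y + s) / 3)) := by gcongr; linarith
    _ < 3 / 4 * (1 / 3) := by gcongr
    _ ≤ δ := by linarith

/-- The fixed point `ε₀` of `g` satisfies `1/5 < ε₀ < 1/4`. -/
theorem fixed_point_bounds (ε₀ : ℝ) (hε₀ : ε₀ ∈ Set.Ioo (0 : ℝ) (1 / 3))
    (hfix : gfun ε₀ = ε₀) : 1 / 5 < ε₀ ∧ ε₀ < 1 / 4 := by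
  obtain ⟨h0, h3⟩ := hε₀
  constructor
  · by_contra! h
    exact (lt_gfun_of_le_one_fifth h0 h).ne' hfix
  · by_contra! h
    exact (gfun_lt_of_one_fourth_le h h3).ne hfix
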